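/- Let γ = (γ_1, …, γ_n) ∈ ℕ^n, let c > 0 be a real number, and consider the integral over the polydisk {y ∈ ℂ^n : |y_1| < 1, …, |y_n| < 1} of the function |y_1|^{2γ_1} ⋯ |y_n|^{2γ_n} · |y|^{−2c} with respect to Lebesgue measure on ℂ^n ≅ ℝ^{2n}. This integral is finite if and only if γ_1 + ⋯ + γ_n > c − n, i.e. if and only if ∑_j γ_j ≥ ⌊c⌋ − n + 1 when c is not an integer. -/

import Mathlib

/-!
The weight is positively homogeneous of degree `d = 2 ∑ γᵢ - 2c`, continuous away from the origin
and not identically zero there; the polydisk is the unit ball of `Fin n → ℂ`, which carries the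
sup norm and has real dimension `2n`. The punctured closed unit ball of an `m`-dimensional real
normed space is the disjoint union of the dyadic annuli `2⁻ᵏ • A`, `A = {1/2 < ‖x‖ ≤ 1}`, and by
homogeneity and the scaling of Haar measure the integral over `2⁻ᵏ • A` is `2^(-k(d + m))` times
the integral over `A`, which is finite and positive. So the integral is a geometric series, finite
iff `d + m > 0`.
-/

open MeasureTheory Real Metric Module
open scoped ENNReal Pointwise

theorem setLIntegral_ofReal_pos_of_continuousOn {X : Type*} [TopologicalSpace X]
    [MeasurableSpace X] [OpensMeasurableSpace X] {ν : Measure X} [ν.IsOpenPosMeasure]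
    {f : X → ℝ} {s : Set X} (hs : IsOpen s) (hf : ContinuousOn f s) {x : X} (hxs : x ∈ s)
    (hfx : 0 < f x) : 0 < ∫⁻ y in s, ENNReal.ofReal (f y) ∂ν := by
  have hU : IsOpen (s ∩ f ⁻¹' Set.Ioi 0) := hf.isOpen_inter_preimage hs isOpen_Ioi
  refine pos_iff_ne_zero.2 fun h0 ↦ (hU.measure_pos ν ⟨x, hxs, hfx⟩).ne' ?_
  rw [setLIntegral_eq_zero_iff' hs.measurableSet
    (hf.aemeasurable hs.measurableSet).ennreal_ofReal] at h0
  refine measure_eq_zero_iff_ae_notMem.2 (h0.mono fun y hy hyU ↦ ?_)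
  exact (ENNReal.ofReal_pos.2 hyU.2).ne' (hy hyU.1)

section Homogeneous

variable {E : Type*} [NormedAddCommGroup E] [NormedSpace ℝ E] [MeasurableSpace E] [BorelSpace E]
  (μ : Measure E) [μ.IsAddHaarMeasure]

theorem setLIntegral_ofReal_annulus_pos_of_homogeneous {f : E → ℝ} {d : ℝ}
    (hf_nonneg : ∀ x, 0 ≤ f x) (hf_cont : ContinuousOn f {0}ᶜ)
    (hf_hom : ∀ t : ℝ, 0 < t → ∀ x, f (t • x) = t ^ d * f x) (hf_ne : ∃ x ≠ 0, f x ≠ 0) :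
    0 < ∫⁻ x in closedBall 0 1 \ closedBall 0 2⁻¹, ENNReal.ofReal (f x) ∂μ := by
  obtain ⟨x, hx0, hfx⟩ := hf_ne
  set t : ℝ := 3 / 4 * ‖x‖⁻¹
  have ht : 0 < t := by positivity
  have hO : IsOpen (ball (0 : E) 1 \ closedBall 0 2⁻¹) := isOpen_ball.sdiff isClosed_closedBall
  have htx : t • x ∈ ball (0 : E) 1 \ closedBall 0 2⁻¹ := by
    have : ‖t • x‖ = 3 / 4 := by
      rw [norm_smul, Real.norm_of_nonneg ht.le, mul_assoc,
        inv_mul_cancel₀ (norm_ne_zero_iff.2 hx0), mul_one]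
    simp only [Set.mem_sdiff, mem_ball_zero_iff, mem_closedBall_zero_iff, this, not_le]
    norm_num
  refine lt_of_lt_of_le (setLIntegral_ofReal_pos_of_continuousOn hO (hf_cont.mono ?_) htx ?_)
    (lintegral_mono_set (Set.sdiff_subset_sdiff_left ball_subset_closedBall))
  · exact fun y hy (h0 : y = 0) ↦ hy.2 (by simp [h0])
  · rw [hf_hom t ht]
    exact mul_pos (rpow_pos_of_pos ht d) ((hf_nonneg x).lt_of_ne' hfx)

variable [FiniteDimensional ℝ E]

theorem lintegral_comp_smul (g : E → ℝ≥0∞) {t : ℝ} (ht : t ≠ 0) :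
    ∫⁻ x, g (t • x) ∂μ = ENNReal.ofReal |(t ^ finrank ℝ E)⁻¹| * ∫⁻ x, g x ∂μ := by
  rw [← smul_eq_mul, ← lintegral_smul_measure, ← Measure.map_addHaar_smul μ ht]
  exact (lintegral_map_equiv g (Homeomorph.smulOfNeZero t ht).toMeasurableEquiv).symm

theorem setLIntegral_smul_set_of_homogeneous {F : E → ℝ≥0∞} {d : ℝ}
    (hF : ∀ t : ℝ, 0 < t → ∀ x, F (t • x) = ENNReal.ofReal (t ^ d) * F x)
    {t : ℝ} (ht : 0 < t) {s : Set E} (hs : MeasurableSet s) :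
    ∫⁻ x in t • s, F x ∂μ = ENNReal.ofReal (t ^ (d + finrank ℝ E)) * ∫⁻ x in s, F x ∂μ := by
  have hind : ∀ x, (t • s).indicator F x = s.indicator (fun y ↦ F (t • y)) (t⁻¹ • x) := by
    intro x
    have hmem := Set.mem_smul_set_iff_inv_smul_mem₀ ht.ne' s x
    by_cases hx : t⁻¹ • x ∈ s
    · rw [Set.indicator_of_mem (hmem.2 hx), Set.indicator_of_mem hx, smul_inv_smul₀ ht.ne']
    · rw [Set.indicator_of_notMem (mt hmem.1 hx), Set.indicator_of_notMem hx]
  rw [← lintegral_indicator (hs.const_smul₀ t), funext hind,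
    lintegral_comp_smul μ _ (inv_ne_zero ht.ne'), lintegral_indicator hs]
  simp_rw [hF t ht]
  rw [lintegral_const_mul' _ _ ENNReal.ofReal_ne_top, ← mul_assoc,
    ← ENNReal.ofReal_mul (by positivity), rpow_add ht, rpow_natCast, inv_pow, inv_inv,
    abs_of_pos (by positivity), mul_comm (t ^ _)]

theorem lintegral_closedBall_eq_of_homogeneous [Nontrivial E] {F : E → ℝ≥0∞} {d : ℝ}
    (hF : ∀ t : ℝ, 0 < t → ∀ x, F (t • x) = ENNReal.ofReal (t ^ d) * F x) :
    ∫⁻ x in closedBall 0 1, F x ∂μ =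
      (1 - ENNReal.ofReal (2⁻¹ ^ (d + finrank ℝ E)))⁻¹ *
        ∫⁻ x in closedBall 0 1 \ closedBall 0 2⁻¹, F x ∂μ := by
  set A : ℕ → Set E := fun k ↦ closedBall 0 (2⁻¹ ^ k) \ closedBall 0 (2⁻¹ ^ (k + 1))
  have hA_meas : ∀ k, MeasurableSet (A k) := fun k ↦
    measurableSet_closedBall.diff measurableSet_closedBall
  have hA_smul : ∀ k, A k = (2⁻¹ ^ k : ℝ) • A 0 := by
    intro k
    have hk : (0 : ℝ) < 2⁻¹ ^ k := by positivity
    simp only [A, zero_add, pow_zero, pow_one]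
    rw [Set.smul_set_sdiff₀ hk.ne', _root_.smul_closedBall _ _ zero_le_one,
      _root_.smul_closedBall _ _ (by norm_num), smul_zero, Real.norm_of_nonneg hk.le, mul_one,
      pow_succ]
  have hA_disj : Pairwise (Function.onFun Disjoint A) := by
    refine pairwise_disjoint_on _ |>.2 fun j k hjk ↦ ?_
    refine Set.disjoint_left.2 fun x hxj hxk ↦ hxj.2 ?_
    exact closedBall_subset_closedBall (pow_le_pow_of_le_one (by norm_num) (by norm_num) hjk)
      hxk.1
  have hA_iUnion : ⋃ k, A k = closedBall 0 1 \ {0} := by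
    ext x
    simp only [A, Set.mem_iUnion, Set.mem_sdiff, mem_closedBall_zero_iff, not_le,
      Set.mem_singleton_iff]
    constructor
    · rintro ⟨k, hxk, hxk'⟩
      exact ⟨hxk.trans (pow_le_one₀ (by norm_num) (by norm_num)),
        norm_pos_iff.1 ((pow_pos (by norm_num) _).trans hxk')⟩
    · rintro ⟨hx1, hx0⟩
      obtain ⟨k, hk⟩ := exists_nat_pow_near_of_lt_one (norm_pos_iff.2 hx0) hx1
        (by norm_num : (0 : ℝ) < 2⁻¹) (by norm_num)
      exact ⟨k, hk.2, hk.1⟩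
  have hA_integral : ∀ k, ∫⁻ x in A k, F x ∂μ =
      ENNReal.ofReal (2⁻¹ ^ (d + finrank ℝ E)) ^ k * ∫⁻ x in A 0, F x ∂μ := by
    intro k
    rw [hA_smul k, setLIntegral_smul_set_of_homogeneous μ hF (by positivity) (hA_meas 0),
      ← rpow_natCast_mul (by norm_num), mul_comm (k : ℝ), rpow_mul_natCast (by norm_num),
      ENNReal.ofReal_pow (by positivity)]
  calc ∫⁻ x in closedBall 0 1, F x ∂μ = ∫⁻ x in closedBall 0 1 \ {0}, F x ∂μ :=
        setLIntegral_congr (sdiff_null_ae_eq_self (measure_singleton 0)).symm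
    _ = ∑' k, ∫⁻ x in A k, F x ∂μ := by rw [← hA_iUnion, lintegral_iUnion hA_meas hA_disj]
    _ = _ := by
      simp only [hA_integral, ENNReal.tsum_mul_right, ENNReal.tsum_geometric, A, pow_zero,
        zero_add, pow_one]

theorem setLIntegral_ofReal_annulus_lt_top {f : E → ℝ} (hf : ContinuousOn f {0}ᶜ) (R : ℝ)
    {r : ℝ} (hr : 0 < r) :
    ∫⁻ x in closedBall 0 R \ closedBall 0 r, ENNReal.ofReal (f x) ∂μ < ⊤ := by
  have hK : IsCompact (closedBall (0 : E) R \ ball 0 r) :=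
    (isCompact_closedBall 0 R).diff isOpen_ball
  have hint := (hf.mono fun x hx (h0 : x = 0) ↦ hx.2 (by simp [h0, hr])).integrableOn_compact
    (μ := μ) hK
  exact (hint.mono_set (Set.sdiff_subset_sdiff_right ball_subset_closedBall)).setLIntegral_lt_top

theorem integrableOn_ball_iff_of_homogeneous [Nontrivial E] {f : E → ℝ} {d : ℝ}
    (hf_nonneg : ∀ x, 0 ≤ f x) (hf_cont : ContinuousOn f {0}ᶜ)
    (hf_hom : ∀ t : ℝ, 0 < t → ∀ x, f (t • x) = t ^ d * f x) (hf_ne : ∃ x ≠ 0, f x ≠ 0) :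
    IntegrableOn f (ball 0 1) μ ↔ 0 < d + finrank ℝ E := by
  have hA_fin := setLIntegral_ofReal_annulus_lt_top μ hf_cont 1 (by norm_num : (0 : ℝ) < 2⁻¹)
  have hA_pos := setLIntegral_ofReal_annulus_pos_of_homogeneous μ hf_nonneg hf_cont hf_hom hf_ne
  have hball : ball (0 : E) 1 =ᵐ[μ] closedBall 0 1 := by
    refine ae_eq_set.2 ⟨by simp [Set.sdiff_eq_empty.2 ball_subset_closedBall], ?_⟩
    rw [closedBall_sdiff_ball]
    exact Measure.addHaar_sphere μ 0 1
  have hf_meas : AEStronglyMeasurable f μ := by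
    rw [← restrict_compl_singleton (μ := μ) (0 : E)]
    exact hf_cont.aestronglyMeasurable (measurableSet_singleton 0).compl
  have hF_hom : ∀ t : ℝ, 0 < t → ∀ x,
      ENNReal.ofReal (f (t • x)) = ENNReal.ofReal (t ^ d) * ENNReal.ofReal (f x) :=
    fun t ht x ↦ by rw [hf_hom t ht, ENNReal.ofReal_mul (by positivity)]
  rw [integrableOn_congr_set_ae hball, IntegrableOn, Integrable,
    and_iff_right hf_meas.restrict, hasFiniteIntegral_iff_ofReal (ae_of_all _ hf_nonneg),
    lintegral_closedBall_eq_of_homogeneous μ hF_hom, lt_top_iff_ne_top, ne_eq, ENNReal.mul_eq_top]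
  simp only [hA_fin.ne, hA_pos.ne', ne_eq, not_false_eq_true, and_true, and_false, false_or,
    ENNReal.inv_eq_top, tsub_eq_zero_iff_le, not_le, ENNReal.ofReal_lt_one]
  rw [rpow_lt_one_iff_of_pos (by norm_num)]
  norm_num

end Homogeneous

section ProductWeight

variable {ι F : Type*} [Fintype ι] [NormedAddCommGroup F] [NormedSpace ℝ F]

theorem prod_norm_smul_pow (p : ι → ℕ) {t : ℝ} (ht : 0 ≤ t) (y : ι → F) :
    ∏ i, ‖(t • y) i‖ ^ p i = t ^ (∑ i, p i) * ∏ i, ‖y i‖ ^ p i := by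
  simp only [Pi.smul_apply, norm_smul, Real.norm_of_nonneg ht, mul_pow, Finset.prod_mul_distrib,
    Finset.prod_pow_eq_pow_sum]

theorem integrableOn_ball_prod_norm_pow_mul_norm_rpow_iff [Nonempty ι] [Nontrivial F]
    [FiniteDimensional ℝ F] [MeasurableSpace F] [BorelSpace F] (μ : Measure (ι → F))
    [μ.IsAddHaarMeasure] (p : ι → ℕ) (s : ℝ) :
    IntegrableOn (fun y ↦ (∏ i, ‖y i‖ ^ p i) * ‖WithLp.toLp 2 y‖ ^ (-s)) (ball 0 1) μ ↔
      s < ∑ i, (p i : ℝ) + finrank ℝ (ι → F) := by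
  have hcont : ContinuousOn (fun y : ι → F ↦ (∏ i, ‖y i‖ ^ p i) * ‖WithLp.toLp 2 y‖ ^ (-s))
      {0}ᶜ := by
    refine (continuous_finsetProd _ fun i _ ↦ by fun_prop).continuousOn.mul ?_
    exact (by fun_prop : Continuous fun y : ι → F ↦ ‖WithLp.toLp 2 y‖).continuousOn.rpow_const
      fun y hy ↦ Or.inl (by simpa using hy)
  have hhom : ∀ t : ℝ, 0 < t → ∀ y : ι → F,
      (∏ i, ‖(t • y) i‖ ^ p i) * ‖WithLp.toLp 2 (t • y)‖ ^ (-s) =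
        t ^ (∑ i, (p i : ℝ) - s) * ((∏ i, ‖y i‖ ^ p i) * ‖WithLp.toLp 2 y‖ ^ (-s)) := by
    intro t ht y
    rw [prod_norm_smul_pow p ht.le, WithLp.toLp_smul, norm_smul, Real.norm_of_nonneg ht.le,
      mul_rpow ht.le (norm_nonneg _), rpow_sub ht, rpow_neg ht.le, ← Nat.cast_sum, rpow_natCast]
    ring
  obtain ⟨v, hv⟩ := exists_ne (0 : F)
  have hv' : (fun _ ↦ v : ι → F) ≠ 0 := fun h ↦ hv (congrFun h (Classical.arbitrary ι))
  refine (integrableOn_ball_iff_of_homogeneous μ (fun y ↦ by positivity) hcont hhom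
    ⟨fun _ ↦ v, hv', ?_⟩).trans ?_
  · exact (mul_pos (Finset.prod_pos fun i _ ↦ pow_pos (norm_pos_iff.2 hv) _)
      (rpow_pos_of_pos (norm_pos_iff.2 ((WithLp.toLp_eq_zero 2).not.2 hv')) _)).ne'
  · constructor <;> intro h <;> linarith

end ProductWeight

theorem polydisk_integrability_criterion_general {n : ℕ} (hn : 0 < n)
    (γ : Fin n → ℕ) (c : ℝ) :
    IntegrableOn
      (fun y : Fin n → ℂ =>
        (∏ i, ‖y i‖ ^ (2 * γ i)) *
          (Real.sqrt (∑ i, ‖y i‖ ^ 2)) ^ (-(2 * c)))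
      {y : Fin n → ℂ | ∀ i, ‖y i‖ < 1} volume
      ↔ (c - n < ∑ i, (γ i : ℝ)) := by
  have : Nonempty (Fin n) := ⟨⟨0, hn⟩⟩
  have hpolydisk : {y : Fin n → ℂ | ∀ i, ‖y i‖ < 1} = ball 0 1 := by
    ext y
    simp [pi_norm_lt_iff one_pos]
  have heuclid : ∀ y : Fin n → ℂ, √(∑ i, ‖y i‖ ^ 2) = ‖WithLp.toLp 2 y‖ :=
    fun y ↦ (PiLp.norm_eq_of_L2 _).symm
  have hdim : finrank ℝ (Fin n → ℂ) = n * 2 := by simp [finrank_pi_fintype]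
  simp_rw [heuclid, hpolydisk]
  refine (integrableOn_ball_prod_norm_pow_mul_norm_rpow_iff (F := ℂ) volume
    (fun i ↦ 2 * γ i) (2 * c)).trans ?_
  rw [hdim]
  push_cast
  rw [← Finset.mul_sum]
  constructor <;> intro h <;> linarith

/-- The integral over the unit polydisk in `ℂⁿ` of
`|y₁|^(2γ₁) ⋯ |yₙ|^(2γₙ) · |y|^(-2c)` (Lebesgue measure, `|y|` the Euclidean
norm) is finite iff `γ₁ + ⋯ + γₙ > c - n`. -/
theorem polydisk_integrability_criterion {n : ℕ} (hn : 0 < n)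
    (γ : Fin n → ℕ) (c : ℝ) (hc : 0 < c) :
    IntegrableOn
      (fun y : Fin n → ℂ =>
        (∏ i, ‖y i‖ ^ (2 * γ i)) *
          (Real.sqrt (∑ i, ‖y i‖ ^ 2)) ^ (-(2 * c)))
      {y : Fin n → ℂ | ∀ i, ‖y i‖ < 1} volume
      ↔ (c - n < ∑ i, (γ i : ℝ)) :=
  polydisk_integrability_criterion_general hn γ c
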